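/- arXiv:2306.07893 — 4 statements merged into one kernel-verified Lean document; each statement's English description precedes it below -/
import Mathlib

section
/- Let n ≥ 2 and let M be any merit-based monotone mechanism (M ∈ M³) for n creators. In the Trend-vs-Niche (TvN) game induced by M, the strategy profile s* = (e₁, …, e₁) in which every creator plays e₁ is a pure Nash equilibrium, and it is the unique pure Nash equilibrium of the game. -/
/-- A score vector is "sorted" if it is nonincreasing and takes values in `[0,1]`. -/
def SortedScores (n : ℕ) (σ : Fin n → ℝ) : Prop :=
  (∀ i j : Fin n, i ≤ j → σ j ≤ σ i) ∧ ∀ i, σ i ∈ Set.Icc (0:ℝ) 1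

/-- The sorted score vector consisting of `k` ones followed by zeros. -/
def onesVec (n k : ℕ) : Fin n → ℝ := fun i => if (i : ℕ) < k then 1 else 0

/-- A merit-based monotone mechanism (the class `M³`): `M σ i` is the reward of the
creator holding the `i`-th largest score of the nonincreasing score vector `σ`. -/
structure MeritMonotone (n : ℕ) (M : (Fin n → ℝ) → Fin n → ℝ) : Prop where
  reward_mem : ∀ σ, SortedScores n σ → ∀ i, M σ i ∈ Set.Icc (0:ℝ) 1
  eq_scores : ∀ σ, SortedScores n σ → ∀ i j, σ i = σ j → M σ i = M σ j
  normal_zero : ∀ σ, SortedScores n σ → ∀ i, σ i = 0 → M σ i = 0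
  normal_one : ∀ i : Fin n, onesVec n 1 i = 1 → 0 < M (onesVec n 1) i
  fairness : ∀ σ, SortedScores n σ → ∀ i j : Fin n, i ≤ j → M σ j ≤ M σ i
  neg_ext : ∀ σ σ', SortedScores n σ → SortedScores n σ' → ∀ i, σ' i = σ i →
    (∀ j, j ≠ i → σ j ≤ σ' j) → M σ' i ≤ M σ i
  total_mono : ∀ σ σ', SortedScores n σ → SortedScores n σ' → (∀ j, σ j ≤ σ' j) →
    (∑ i, M σ i) ≤ ∑ i, M σ' i

/-- In the TvN game (strategy `s i : Fin n` = index of the basis vector chosen by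
creator `i`), the number of creators playing `e_j`. -/
def cnt {n : ℕ} (s : Fin n → Fin n) (j : Fin n) : ℕ :=
  (Finset.univ.filter fun i => s i = j).card

/-- Creator `i`'s reward at a user of type `e_j`: the score vector there is
`cnt s j` ones followed by zeros; creator `i` has score `1` iff `s i = j`. -/
def rewardAt {n : ℕ} (M : (Fin n → ℝ) → Fin n → ℝ) (s : Fin n → Fin n)
    (i j : Fin n) : ℝ :=
  if s i = j then M (onesVec n (cnt s j)) ⟨0, i.pos⟩
  else M (onesVec n (cnt s j)) ⟨n - 1, by have := i.pos; omega⟩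

/-- Creator `i`'s total utility in the TvN game: `n+1` users of type `e₁`
(index `0`) and one user of type `e_j` for every other `j`. -/
def utility {n : ℕ} (M : (Fin n → ℝ) → Fin n → ℝ) (s : Fin n → Fin n) (i : Fin n) : ℝ :=
  ∑ j : Fin n, (if (j : ℕ) = 0 then (n + 1 : ℝ) else 1) * rewardAt M s i j

lemma sortedOnes {n : ℕ} (k : ℕ) : SortedScores n (onesVec n k) := by
  refine ⟨fun i j hij => ?_, fun i => ?_⟩
  · have h : (i:ℕ) ≤ j := hij
    unfold onesVec
    split <;> split <;> norm_num <;> omega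
  · unfold onesVec; split <;> norm_num

lemma onesVec_mono {n k k' : ℕ} (h : k ≤ k') (i : Fin n) :
    onesVec n k i ≤ onesVec n k' i := by
  unfold onesVec
  split <;> split <;> norm_num <;> omega

noncomputable def fv {n : ℕ} (M : (Fin n → ℝ) → Fin n → ℝ) (hn : 0 < n) (k : ℕ) : ℝ :=
  M (onesVec n k) ⟨0, hn⟩

section fvlems
variable {n : ℕ} {M : (Fin n → ℝ) → Fin n → ℝ} (hM : MeritMonotone n M) (hn : 0 < n)
include hM

lemma fv_nonneg (k : ℕ) : 0 ≤ fv M hn k :=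
  (hM.reward_mem _ (sortedOnes k) _).1

lemma fv_one_pos : 0 < fv M hn 1 := by
  apply hM.normal_one ⟨0, hn⟩
  simp [onesVec]

lemma fv_anti {k k' : ℕ} (h1 : 1 ≤ k) (h : k ≤ k') : fv M hn k' ≤ fv M hn k := by
  apply hM.neg_ext (onesVec n k) (onesVec n k') (sortedOnes k) (sortedOnes k') ⟨0, hn⟩
  · simp only [onesVec]
    rw [if_pos, if_pos] <;> omega
  · intro j _; exact onesVec_mono h j

lemma sum_ones_eq {k : ℕ} (h1 : 1 ≤ k) (hk : k ≤ n) :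
    ∑ i, M (onesVec n k) i = k * fv M hn k := by
  have hval : ∀ i : Fin n, M (onesVec n k) i =
      if (i : ℕ) < k then fv M hn k else 0 := by
    intro i
    by_cases hi : (i:ℕ) < k
    · rw [if_pos hi]
      exact hM.eq_scores _ (sortedOnes k) i ⟨0, hn⟩ (by simp only [onesVec]; rw [if_pos hi, if_pos (by omega : 0 < k)])
    · rw [if_neg hi]
      exact hM.normal_zero _ (sortedOnes k) i (by simp only [onesVec]; rw [if_neg hi])
  calc ∑ i, M (onesVec n k) i
      = ∑ i : Fin n, (fun m : ℕ => if m < k then fv M hn k else 0) (i : ℕ) := by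
        simp only [hval]
    _ = ∑ m ∈ Finset.range n, (if m < k then fv M hn k else 0) := by
        exact Fin.sum_univ_eq_sum_range (fun m => if m < k then fv M hn k else 0) n
    _ = ∑ m ∈ (Finset.range n).filter (· < k), fv M hn k := (Finset.sum_filter _ _).symm
    _ = ∑ m ∈ Finset.range k, fv M hn k := by
        congr 1
        ext m; simp; omega
    _ = k * fv M hn k := by
        rw [Finset.sum_const, Finset.card_range, nsmul_eq_mul]

lemma kf_mono {k k' : ℕ} (h1 : 1 ≤ k) (h : k ≤ k') (hk' : k' ≤ n) :
    (k : ℝ) * fv M hn k ≤ (k' : ℝ) * fv M hn k' := by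
  have := hM.total_mono (onesVec n k) (onesVec n k') (sortedOnes k) (sortedOnes k')
    (onesVec_mono h)
  rwa [sum_ones_eq hM hn h1 (h.trans hk'), sum_ones_eq hM hn (h1.trans h) hk'] at this

end fvlems

section cntlems
variable {n : ℕ}

lemma cnt_le (s : Fin n → Fin n) (j : Fin n) : cnt s j ≤ n := by
  unfold cnt
  exact (Finset.card_filter_le _ _).trans (by simp)

lemma one_le_cnt {s : Fin n → Fin n} {i j : Fin n} (h : s i = j) : 1 ≤ cnt s j :=
  Finset.card_pos.mpr ⟨i, by simp [h]⟩

lemma cnt_lt_of_ne {s : Fin n → Fin n} {i j : Fin n} (h : s i ≠ j) : cnt s j < n := by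
  have hne : (Finset.univ.filter fun i' => s i' = j) ≠ Finset.univ := by
    intro he
    have hi : i ∈ (Finset.univ.filter fun i' => s i' = j) := by rw [he]; exact Finset.mem_univ i
    exact h (Finset.mem_filter.mp hi).2
  have := Finset.card_lt_card (Finset.ssubset_univ_iff.mpr hne)
  simpa [cnt] using this

lemma utility_eq {M : (Fin n → ℝ) → Fin n → ℝ} (hM : MeritMonotone n M)
    (s : Fin n → Fin n) (i : Fin n) :
    utility M s i = (if ((s i : ℕ)) = 0 then (n + 1 : ℝ) else 1) *
      fv M i.pos (cnt s (s i)) := by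
  unfold utility
  rw [Finset.sum_eq_single (s i)]
  · rw [rewardAt, if_pos rfl]; rfl
  · intro j _ hj
    have h0 : rewardAt M s i j = 0 := by
      unfold rewardAt
      rw [if_neg (fun h => hj h.symm)]
      apply hM.normal_zero _ (sortedOnes _)
      have hlt : cnt s j < n := cnt_lt_of_ne (fun h => hj h.symm)
      simp only [onesVec]
      rw [if_neg]
      omega
    rw [h0, mul_zero]
  · simp

end cntlems

section more
variable {n : ℕ}

lemma cnt_const (z : Fin n) : cnt (fun _ : Fin n => z) z = n := by
  unfold cnt; simp

lemma cnt_update_const {i j z : Fin n} (hz : j ≠ z) :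
    cnt (Function.update (fun _ : Fin n => z) i j) j = 1 := by
  unfold cnt
  have : (Finset.univ.filter fun i' => Function.update (fun _ : Fin n => z) i j i' = j)
      = {i} := by
    ext i'
    by_cases h : i' = i <;> simp [Function.update_apply, h, Ne.symm hz]
  rw [this, Finset.card_singleton]

lemma cnt_update_to {s : Fin n → Fin n} {i z : Fin n} (h : s i ≠ z) :
    cnt (Function.update s i z) z = cnt s z + 1 := by
  unfold cnt
  have : (Finset.univ.filter fun i' => Function.update s i z i' = z)
      = insert i (Finset.univ.filter fun i' => s i' = z) := by
    ext i'
    by_cases hii : i' = i <;> simp [Function.update_apply, hii]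
  rw [this, Finset.card_insert_of_notMem (by simp [h])]

end more

/-- For any merit-based monotone mechanism, the all-`e₁` profile is a
pure Nash equilibrium of the TvN game, and it is the unique pure Nash equilibrium. -/
theorem stmt0 {n : ℕ} (hn : 2 ≤ n) (M : (Fin n → ℝ) → Fin n → ℝ)
    (hM : MeritMonotone n M) :
    (∀ (i : Fin n) (s'i : Fin n),
        utility M (Function.update (fun _ => (⟨0, by omega⟩ : Fin n)) i s'i) i ≤
          utility M (fun _ => (⟨0, by omega⟩ : Fin n)) i) ∧
    (∀ s : Fin n → Fin n,
        (∀ (i : Fin n) (s'i : Fin n), utility M (Function.update s i s'i) i ≤ utility M s i) →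
        s = fun _ => (⟨0, by omega⟩ : Fin n)) := by
  have hn0 : 0 < n := by omega
  set z : Fin n := ⟨0, by omega⟩ with hzdef
  constructor
  · intro i s'i
    by_cases hz : s'i = z
    · rw [hz, show (Function.update (fun _ => z) i z) = (fun _ => z) by
        simpa using Function.update_eq_self i (fun _ : Fin n => z)]
    · rw [utility_eq hM, utility_eq hM]
      have h1 : Function.update (fun _ => z) i s'i i = s'i := by simp
      have h2 : ((s'i : ℕ)) ≠ 0 := fun h => hz (Fin.ext h)
      rw [h1, if_neg h2, cnt_update_const hz, if_pos rfl, cnt_const]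
      have hk := kf_mono hM i.pos (le_refl 1) hn0 (le_refl n)
      have hnn := fv_nonneg hM i.pos n
      push_cast at hk
      have hcast : (1 : ℝ) ≤ (n : ℝ) := by exact_mod_cast hn0
      nlinarith
  · intro s hs
    funext i
    by_contra hne
    have h2 : ((s i : ℕ)) ≠ 0 := fun h => hne (Fin.ext h)
    have hd := hs i z
    rw [utility_eq hM, utility_eq hM] at hd
    have h1 : Function.update s i z i = z := Function.update_self i z s
    rw [h1, if_pos rfl, if_neg h2, cnt_update_to hne] at hd
    set m := cnt s z with hm
    set k := cnt s (s i) with hk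
    have hk1 : 1 ≤ k := one_le_cnt rfl
    have hmlt : m < n := cnt_lt_of_ne hne
    have hfk : fv M i.pos k ≤ fv M i.pos 1 := fv_anti hM i.pos (le_refl 1) hk1
    have hf1 := kf_mono hM i.pos (le_refl 1) (show 1 ≤ m + 1 by omega)
      (show m + 1 ≤ n by omega)
    have hF : 0 ≤ fv M i.pos (m + 1) := fv_nonneg hM i.pos (m + 1)
    have hpos : 0 < fv M i.pos 1 := fv_one_pos hM i.pos
    have hcast : ((m : ℝ) + 1) ≤ (n : ℝ) := by exact_mod_cast hmlt
    push_cast at hf1 hd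
    have hint : ((m : ℝ) + 1) * fv M i.pos (m + 1) ≤ (n : ℝ) * fv M i.pos (m + 1) :=
      mul_le_mul_of_nonneg_right hcast hF
    have hnF : ((n : ℝ) + 1) * fv M i.pos (m + 1) ≤ (n : ℝ) * fv M i.pos (m + 1) := by
      linarith
    have hF0 : fv M i.pos (m + 1) ≤ 0 := by linarith
    have hmp : (0:ℝ) ≤ (m : ℝ) + 1 := by positivity
    have := mul_nonpos_of_nonneg_of_nonpos hmp hF0
    linarith
end

section
/- In the TvN game with n ≥ 2 creators, 1 ≤ K ≤ n, and attention weights r₁ ≥ ⋯ ≥ r_K ≥ 0 = r_{K+1} = ⋯ = rₙ with r₁ > 0, the profile s* = (e₁, …, e₁) satisfies W(s*) ≤ [K(n+1)/(n(K+1))] · max_{s} W(s); equivalently, W(s*)/max_s W(s) ≤ K/(K+1) + K/(n(K+1)), so s* attains at most a K/(K+1) + O(1/n) fraction of the optimal welfare. -/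
/-- Social welfare of the TvN game with attention weights `r` (0-indexed: `r ⟨0⟩` is the
attention to the top-ranked content): at a user of type `e_j`, the `k`-th largest matching
score is `1` exactly when `k < cnt s j`. -/
def tvnWelfare {n : ℕ} (r : Fin n → ℝ) (s : Fin n → Fin n) : ℝ :=
  ∑ j : Fin n, (if (j : ℕ) = 0 then (n + 1 : ℝ) else 1) *
    ∑ k : Fin n, (if (k : ℕ) < cnt s j then r k else 0)


private lemma card_lt_filter {n : ℕ} (K : ℕ) (h : K ≤ n) :
    ((Finset.univ : Finset (Fin n)).filter fun i : Fin n => (i:ℕ) < K).card = K := by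
  have : ((Finset.univ : Finset (Fin n)).filter fun i : Fin n => (i:ℕ) < K)
      = (Finset.range K).attachFin (fun m hm => lt_of_lt_of_le (Finset.mem_range.mp hm) h) := by
    ext i; simp [Finset.mem_attachFin]
  rw [this, Finset.card_attachFin, Finset.card_range]

/-- In the TvN game with attention weights
`r₁ ≥ ⋯ ≥ r_K ≥ 0 = r_{K+1} = ⋯ = rₙ` and `r₁ > 0`, the all-`e₁` profile attains at most a
`K(n+1)/(n(K+1))` fraction of the optimal welfare. -/
theorem stmt1 {n : ℕ} (hn : 2 ≤ n) (K : ℕ) (hK1 : 1 ≤ K) (hKn : K ≤ n)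
    (r : Fin n → ℝ)
    (hmono : ∀ i j : Fin n, i ≤ j → r j ≤ r i)
    (hnonneg : ∀ i, 0 ≤ r i)
    (hzero : ∀ k : Fin n, K ≤ (k : ℕ) → r k = 0)
    (hpos : 0 < r ⟨0, by omega⟩) :
    tvnWelfare r (fun _ => (⟨0, by omega⟩ : Fin n)) ≤
      ((K : ℝ) * (n + 1)) / ((n : ℝ) * (K + 1)) *
        Finset.univ.sup'
          (⟨fun _ => (⟨0, by omega⟩ : Fin n), Finset.mem_univ _⟩ :
            (Finset.univ : Finset (Fin n → Fin n)).Nonempty)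
          (tvnWelfare r) := by
  
  have hn0 : 0 < n := by omega
  set z : Fin n := ⟨0, by omega⟩ with hz
  set T : ℝ := ∑ k : Fin n, r k with hT
  have hposz : 0 < r z := hpos
  have hz0 : (z:ℕ) = 0 := rfl
  -- welfare of the all-e1 profile
  have hcnt0 : ∀ j : Fin n, cnt (fun _ => z) j = if j = z then n else 0 := by
    intro j
    by_cases h : j = z
    · subst h; simp [cnt]
    · have hzj : ¬ z = j := fun hh => h hh.symm
      simp [cnt, hzj, h]
  have hWconst : tvnWelfare r (fun _ => z) = (n+1) * T := by
    unfold tvnWelfare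
    rw [Finset.sum_eq_single z]
    · have h1 : cnt (fun _ => z) z = n := by rw [hcnt0 z, if_pos rfl]
      rw [h1, if_pos (rfl : (z:ℕ) = 0)]
      congr 1
      apply Finset.sum_congr rfl
      intro k _
      rw [if_pos k.isLt]
    · intro j _ hj
      rw [hcnt0 j, if_neg hj]
      simp
    · simp
  -- candidate profile: K creators on e1, rest spread
  set c : Fin n → Fin n := fun i => if (i:ℕ) < K then z else i with hc
  have hcntz : cnt c z = K := by
    unfold cnt
    have heq : ((Finset.univ : Finset (Fin n)).filter fun i => c i = z)
        = Finset.univ.filter fun i : Fin n => (i:ℕ) < K := by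
      ext i
      simp only [Finset.mem_filter, Finset.mem_univ, true_and, hc]
      constructor
      · intro h
        by_contra hlt
        rw [if_neg hlt] at h
        have : (i:ℕ) = 0 := by rw [h]
        omega
      · intro h; rw [if_pos h]
    rw [heq, card_lt_filter K hKn]
  have hcntj : ∀ j : Fin n, j ≠ z → cnt c j = if K ≤ (j:ℕ) then 1 else 0 := by
    intro j hj
    have hjval : (j:ℕ) ≠ 0 := fun h => hj (Fin.ext h)
    unfold cnt
    by_cases hKj : K ≤ (j:ℕ)
    · rw [if_pos hKj]
      have heq : ((Finset.univ : Finset (Fin n)).filter fun i => c i = j) = {j} := by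
        ext i
        simp only [Finset.mem_filter, Finset.mem_univ, true_and, Finset.mem_singleton, hc]
        constructor
        · intro h
          by_cases hlt : (i:ℕ) < K
          · rw [if_pos hlt] at h; exact absurd h.symm hj
          · rwa [if_neg hlt] at h
        · intro h; subst h
          rw [if_neg (by omega)]
      rw [heq, Finset.card_singleton]
    · rw [if_neg hKj]
      have heq : ((Finset.univ : Finset (Fin n)).filter fun i => c i = j) = ∅ := by
        ext i
        simp only [Finset.mem_filter, Finset.mem_univ, true_and, Finset.notMem_empty,
          iff_false, hc]
        intro h
        by_cases hlt : (i:ℕ) < K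
        · rw [if_pos hlt] at h; exact hj h.symm
        · rw [if_neg hlt] at h
          have : (i:ℕ) = (j:ℕ) := by rw [h]
          omega
      rw [heq, Finset.card_empty]
  -- welfare of the candidate profile
  have hcard2 : ((Finset.univ : Finset (Fin n)).filter fun j : Fin n => K ≤ (j:ℕ)).card
      = n - K := by
    have h1 := Finset.card_filter_add_card_filter_not
      (s := (Finset.univ : Finset (Fin n))) (p := fun j : Fin n => (j:ℕ) < K)
    rw [card_lt_filter K hKn, Finset.card_univ, Fintype.card_fin] at h1
    have h2 : ((Finset.univ : Finset (Fin n)).filter fun j : Fin n => ¬ (j:ℕ) < K)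
        = (Finset.univ : Finset (Fin n)).filter fun j : Fin n => K ≤ (j:ℕ) := by
      apply Finset.filter_congr
      intro j _; simp [not_lt]
    rw [h2] at h1
    omega
  have hWc : tvnWelfare r c = (n+1) * T + ((n:ℝ) - K) * r z := by
    unfold tvnWelfare
    have key : ∀ j : Fin n,
        (if (j:ℕ) = 0 then ((n:ℝ)+1) else 1) * ∑ k : Fin n, (if (k:ℕ) < cnt c j then r k else 0)
        = (if j = z then ((n:ℝ)+1) * T else 0) + (if K ≤ (j:ℕ) then r z else 0) := by
      intro j
      by_cases hj : j = z
      · subst hj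
        rw [hcntz, if_pos (rfl : (z:ℕ) = 0), if_pos rfl, if_neg (by omega : ¬ K ≤ (z:ℕ)),
          add_zero]
        congr 1
        apply Finset.sum_congr rfl
        intro k _
        by_cases hk : (k:ℕ) < K
        · rw [if_pos hk]
        · rw [if_neg hk]
          exact (hzero k (by omega)).symm
      · have hjval : (j:ℕ) ≠ 0 := fun h => hj (Fin.ext h)
        rw [hcntj j hj, if_neg hj, zero_add, if_neg hjval, one_mul]
        by_cases hKj : K ≤ (j:ℕ)
        · rw [if_pos hKj, if_pos hKj]
          rw [Finset.sum_eq_single z]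
          · rw [if_pos (by omega : (z:ℕ) < 1)]
          · intro k _ hk
            have : (k:ℕ) ≠ 0 := fun h0 => hk (Fin.ext h0)
            rw [if_neg (by omega)]
          · simp
        · rw [if_neg hKj, if_neg hKj]
          apply Finset.sum_eq_zero
          intro k _
          rw [if_neg (by omega)]
    rw [Finset.sum_congr rfl (fun j _ => key j), Finset.sum_add_distrib]
    congr 1
    · rw [Finset.sum_ite_eq' Finset.univ z (fun _ => ((n:ℝ)+1) * T), if_pos (Finset.mem_univ z)]
    · rw [← Finset.sum_filter, Finset.sum_const, hcard2, nsmul_eq_mul,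
        Nat.cast_sub hKn]
  -- bounds on T
  have hT0 : 0 ≤ T := Finset.sum_nonneg fun k _ => hnonneg k
  have hTle : T ≤ (K:ℝ) * r z := by
    have h1 : T ≤ ∑ k : Fin n, (if (k:ℕ) < K then r z else 0) := by
      apply Finset.sum_le_sum
      intro k _
      by_cases hk : (k:ℕ) < K
      · rw [if_pos hk]
        exact hmono z k (by simp [hz, Fin.le_def])
      · rw [if_neg hk, hzero k (by omega)]
    calc T ≤ _ := h1
      _ = (K:ℝ) * r z := by
        rw [← Finset.sum_filter, Finset.sum_const, card_lt_filter K hKn, nsmul_eq_mul]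
  -- final chain
  have hfac : (0:ℝ) ≤ ((K : ℝ) * (n + 1)) / ((n : ℝ) * (K + 1)) := by positivity
  have hkey : tvnWelfare r (fun _ => z) ≤
      ((K : ℝ) * (n + 1)) / ((n : ℝ) * (K + 1)) * tvnWelfare r c := by
    rw [hWconst, hWc, div_mul_eq_mul_div, le_div_iff₀ (by positivity)]
    have hKn' : (K:ℝ) ≤ n := by exact_mod_cast hKn
    have hK1' : (1:ℝ) ≤ K := by exact_mod_cast hK1
    nlinarith [mul_nonneg (mul_nonneg (show (0:ℝ) ≤ (n:ℝ)+1 by positivity)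
      (sub_nonneg.mpr hKn')) (sub_nonneg.mpr hTle), hT0, hposz.le]
  refine hkey.trans (mul_le_mul_of_nonneg_left ?_ hfac)
  exact Finset.le_sup' (tvnWelfare r) (Finset.mem_univ c)
end

section
/- Let M be a merit-based monotone mechanism for n creators, and for 1 ≤ k ≤ n let π̃_k denote the total reward Σᵢ M(σᵢ; σ₋ᵢ) on the score vector consisting of k ones followed by n−k zeros. Then: (i) π̃₁ = M(1; (0,…,0)) > 0 and π̃₁ ≤ π̃₂ ≤ ⋯ ≤ π̃ₙ; (ii) on this score vector each of the k creators with score 1 receives exactly π̃_k / k and each creator with score 0 receives 0; (iii) for all 1 ≤ t ≤ n and 1 ≤ k ≤ n, k · π̃_t ≤ n · t · π̃_k. -/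
/-- Total reward `π̃_k` on the score vector of `k` ones followed by `n-k` zeros. -/
def totalOnes {n : ℕ} (M : (Fin n → ℝ) → Fin n → ℝ) (k : ℕ) : ℝ :=
  ∑ i, M (onesVec n k) i

lemma onesVec_sorted (n k : ℕ) : SortedScores n (onesVec n k) := by
  constructor
  · intro i j hij
    unfold onesVec
    have : (i:ℕ) ≤ j := hij
    split <;> split <;> simp_all <;> omega
  · intro i
    unfold onesVec
    split <;> norm_num

lemma reward_const {n : ℕ} (M : (Fin n → ℝ) → Fin n → ℝ)
    (heq : ∀ σ, SortedScores n σ → ∀ i j, σ i = σ j → M σ i = M σ j)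
    (k : ℕ) (hk : 1 ≤ k) (i : Fin n) (hi : (i:ℕ) < k) (hn : 0 < n) :
    M (onesVec n k) i = M (onesVec n k) ⟨0, hn⟩ := by
  apply heq _ (onesVec_sorted n k)
  have : 0 < k := hk
  simp [onesVec, hi, this]

lemma reward_zero {n : ℕ} (M : (Fin n → ℝ) → Fin n → ℝ) (hM : MeritMonotone n M)
    (k : ℕ) (i : Fin n) (hi : k ≤ (i:ℕ)) : M (onesVec n k) i = 0 := by
  apply hM.normal_zero _ (onesVec_sorted n k)
  simp [onesVec]; omega

lemma totalOnes_eq {n : ℕ} (hn : 0 < n) (M : (Fin n → ℝ) → Fin n → ℝ)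
    (hM : MeritMonotone n M) (k : ℕ) (hk : 1 ≤ k) (hkn : k ≤ n) :
    totalOnes M k = k * M (onesVec n k) ⟨0, hn⟩ := by
  unfold totalOnes
  have : ∀ i : Fin n, M (onesVec n k) i =
      if (i:ℕ) < k then M (onesVec n k) ⟨0, hn⟩ else 0 := by
    intro i
    split
    · exact reward_const M hM.eq_scores k hk i ‹_› hn
    · exact reward_zero M hM k i (by omega)
  rw [Finset.sum_congr rfl fun i _ => this i]
  rw [Fin.sum_univ_eq_sum_range (fun j => if j < k then M (onesVec n k) ⟨0, hn⟩ else 0)]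
  rw [← Finset.sum_subset (Finset.range_subset_range.2 hkn)
    (fun x _ hx => by simp at hx; simp; omega)]
  rw [Finset.sum_ite_of_true (fun x hx => Finset.mem_range.1 hx), Finset.sum_const,
    Finset.card_range, nsmul_eq_mul]

/-- For any merit-based monotone mechanism, writing `π̃_k` for the total
reward on `k` ones followed by zeros: (i) `π̃₁ = M(1;(0,…,0)) > 0` and `π̃` is nondecreasing
on `1 ≤ k ≤ n`; (ii) on that vector each of the `k` creators with score `1` gets `π̃_k / k`
and the others get `0`; (iii) `k·π̃_t ≤ n·t·π̃_k` for all `1 ≤ t, k ≤ n`. -/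
theorem stmt4 {n : ℕ} (hn : 1 ≤ n) (M : (Fin n → ℝ) → Fin n → ℝ)
    (hM : MeritMonotone n M) :
    (totalOnes M 1 = M (onesVec n 1) ⟨0, by omega⟩ ∧ 0 < totalOnes M 1 ∧
      ∀ k k' : ℕ, 1 ≤ k → k ≤ k' → k' ≤ n → totalOnes M k ≤ totalOnes M k') ∧
    (∀ k : ℕ, 1 ≤ k → k ≤ n → ∀ i : Fin n,
        ((i : ℕ) < k → M (onesVec n k) i = totalOnes M k / k) ∧
        (k ≤ (i : ℕ) → M (onesVec n k) i = 0)) ∧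
    (∀ t k : ℕ, 1 ≤ t → t ≤ n → 1 ≤ k → k ≤ n →
        (k : ℝ) * totalOnes M t ≤ (n : ℝ) * t * totalOnes M k) := by
  have hn0 : 0 < n := hn
  have hmono : ∀ k k' : ℕ, k ≤ k' → totalOnes M k ≤ totalOnes M k' := by
    intro k k' h
    apply hM.total_mono _ _ (onesVec_sorted n k) (onesVec_sorted n k')
    intro j; unfold onesVec
    split <;> split <;> simp_all <;> omega
  have hT1 : totalOnes M 1 = M (onesVec n 1) ⟨0, hn0⟩ := by
    rw [totalOnes_eq hn0 M hM 1 le_rfl hn]; ring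
  have hpos : 0 < totalOnes M 1 := by
    rw [hT1]; exact hM.normal_one _ (by simp [onesVec])
  have hc : ∀ k t : ℕ, 1 ≤ k → k ≤ t →
      M (onesVec n t) ⟨0, hn0⟩ ≤ M (onesVec n k) ⟨0, hn0⟩ := by
    intro k t hk hkt
    apply hM.neg_ext _ _ (onesVec_sorted n k) (onesVec_sorted n t) ⟨0, hn0⟩
    · simp only [onesVec]
      have h1 : 0 < k := hk
      have h2 : 0 < t := by omega
      simp [h1, h2]
    · intro j _; unfold onesVec
      split <;> split <;> simp_all <;> omega
  refine ⟨⟨hT1, hpos, fun k k' _ h _ => hmono k k' h⟩, ?_, ?_⟩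
  · intro k hk hkn i
    refine ⟨fun hi => ?_, fun h => reward_zero M hM k i h⟩
    rw [reward_const M hM.eq_scores k hk i hi hn0, totalOnes_eq hn0 M hM k hk hkn]
    have : (k:ℝ) ≠ 0 := by positivity
    field_simp
  · intro t k ht htn hk hkn
    have hck0 : 0 ≤ M (onesVec n k) ⟨0, hn0⟩ :=
      (hM.reward_mem _ (onesVec_sorted n k) _).1
    rcases le_or_gt k t with h | h
    · have hle := hc k t hk h
      rw [totalOnes_eq hn0 M hM t ht htn, totalOnes_eq hn0 M hM k hk hkn]
      have hkc : (k:ℝ) ≤ n := by exact_mod_cast hkn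
      have hk1 : (1:ℝ) ≤ k := by exact_mod_cast hk
      have ht1 : (1:ℝ) ≤ t := by exact_mod_cast ht
      have s1 := mul_le_mul_of_nonneg_left hle (show (0:ℝ) ≤ (k:ℝ)*t by positivity)
      have hn1 : (1:ℝ) ≤ n := by exact_mod_cast hn
      have s2 := mul_le_mul_of_nonneg_right hn1
        (mul_nonneg (mul_nonneg (by positivity : (0:ℝ) ≤ (t:ℝ)) (by positivity : (0:ℝ) ≤ (k:ℝ))) hck0)
      nlinarith
    · have h1 : totalOnes M t ≤ totalOnes M k := hmono t k h.le
      have h2 : (k:ℝ) ≤ (n:ℝ) * t := by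
        have : (k:ℝ) ≤ n := by exact_mod_cast hkn
        have ht1 : (1:ℝ) ≤ t := by exact_mod_cast ht
        nlinarith
      have h3 : 0 ≤ totalOnes M k :=
        Finset.sum_nonneg fun i _ => (hM.reward_mem _ (onesVec_sorted n k) i).1
      nlinarith
end

section
/- Consider a C³ game with a finite user set, attention weights r₁ ≥ ⋯ ≥ rₙ ≥ 0 with r₁ > 0, played under the BRCM mechanism M[r₁,…,rₙ] whose functions are the constants f_k ≡ r_k. Then the exact potential equals the social welfare: P(s) = W(s) for every strategy profile s. Consequently, if every strategy set Sᵢ is finite and nonempty, every welfare-maximizing profile is a pure Nash equilibrium, so there exists a pure Nash equilibrium attaining the optimal social welfare. -/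
open MeasureTheory

/-- The defining hypotheses on the family `f₁, …, fₙ` of a Backward Rewarding
Mechanism: each `f k` is integrable on `[0,1]`, nonnegative on `[0,1]`,
pointwise nonincreasing in the index `k`, and `f₁ > 0` on `[0,1]`. -/
def BRMHyp {n : ℕ} (f : Fin n → ℝ → ℝ) : Prop :=
  (∀ k, IntervalIntegrable (f k) volume 0 1) ∧
  (∀ k, ∀ t ∈ Set.Icc (0:ℝ) 1, 0 ≤ f k t) ∧
  (∀ k k' : Fin n, k ≤ k' → ∀ t ∈ Set.Icc (0:ℝ) 1, f k' t ≤ f k t) ∧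
  (∀ k : Fin n, (k : ℕ) = 0 → ∀ t ∈ Set.Icc (0:ℝ) 1, 0 < f k t)

/-- `σ_{k+1}`, with the convention `σ_{n+1} = 0`. -/
def nextVal {n : ℕ} (σ : Fin n → ℝ) (k : Fin n) : ℝ :=
  if h : (k : ℕ) + 1 < n then σ ⟨(k : ℕ) + 1, h⟩ else 0

/-- The BRM reward of the creator at (0-indexed) rank `p` of the nonincreasing score
vector `σ`: `∑_{k ≥ p} ∫_{σ_{k+1}}^{σ_k} f_k(t) dt`. -/
noncomputable def brmRankedN {n : ℕ} (f : Fin n → ℝ → ℝ) (σ : Fin n → ℝ) (p : ℕ) : ℝ :=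
  ∑ k : Fin n, if p ≤ (k : ℕ) then ∫ t in (nextVal σ k)..(σ k), f k t else 0

/-- The BRM reward of the creator holding the `i`-th largest score of the
nonincreasing score vector `σ` (0-indexed). -/
noncomputable def brmRanked {n : ℕ} (f : Fin n → ℝ → ℝ) (σ : Fin n → ℝ) (i : Fin n) : ℝ :=
  brmRankedN f σ (i : ℕ)

/-- The nonincreasing rearrangement of an arbitrary score vector:
`sortDesc σ k` is the `k`-th largest entry of `σ` (0-indexed). -/
noncomputable def sortDesc {n : ℕ} (σ : Fin n → ℝ) : Fin n → ℝ :=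
  fun k => σ (Tuple.sort σ k.rev)

/-- The (0-indexed) rank of creator `i` in the score vector `σ`, ties broken by index. -/
noncomputable def rankCount {n : ℕ} (σ : Fin n → ℝ) (i : Fin n) : ℕ :=
  (Finset.univ.filter fun j => σ i < σ j ∨ (σ i = σ j ∧ j < i)).card

/-- Creator `i`'s BRM reward on an arbitrary score vector `σ ∈ [0,1]ⁿ`. -/
noncomputable def brmRewardAt {n : ℕ} (f : Fin n → ℝ → ℝ) (σ : Fin n → ℝ) (i : Fin n) : ℝ :=
  brmRankedN f (sortDesc σ) (rankCount σ i)

/-- The BRM potential `Φ(σ) = ∑_k ∫₀^{σ_(k)} f_k(t) dt`. -/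
noncomputable def brmPotential {n : ℕ} (f : Fin n → ℝ → ℝ) (σ : Fin n → ℝ) : ℝ :=
  ∑ k : Fin n, ∫ t in (0:ℝ)..(sortDesc σ k), f k t

/-- Creator `i`'s utility in a C³ game with finite user set `U` under the mechanism with
per-user rewards `brmRewardAt f`: total reward over all users minus the production cost. -/
noncomputable def c3Utility {n : ℕ} {U : Type*} [Fintype U] (f : Fin n → ℝ → ℝ)
    (S : Fin n → Type*) (score : ∀ i, S i → U → ℝ) (c : ∀ i, S i → ℝ)
    (s : ∀ i, S i) (i : Fin n) : ℝ :=
  (∑ x : U, brmRewardAt f (fun j => score j (s j) x) i) - c i (s i)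

/-- The potential `P(s) = ∑_x ∑_k ∫₀^{σ_(k)(x)} f_k(t) dt − ∑_i c_i(s_i)`. -/
noncomputable def c3Potential {n : ℕ} {U : Type*} [Fintype U] (f : Fin n → ℝ → ℝ)
    (S : Fin n → Type*) (score : ∀ i, S i → U → ℝ) (c : ∀ i, S i → ℝ)
    (s : ∀ i, S i) : ℝ :=
  (∑ x : U, brmPotential f (fun j => score j (s j) x)) - ∑ i, c i (s i)

/-- Social welfare `W(s) = ∑_x ∑_k r_k σ_(k)(x) − ∑_i c_i(s_i)` of a C³ game with
attention weights `r`. -/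
noncomputable def c3Welfare {n : ℕ} {U : Type*} [Fintype U] (r : Fin n → ℝ)
    (S : Fin n → Type*) (score : ∀ i, S i → U → ℝ) (c : ∀ i, S i → ℝ)
    (s : ∀ i, S i) : ℝ :=
  (∑ x : U, ∑ k : Fin n, r k * sortDesc (fun j => score j (s j) x) k) - ∑ i, c i (s i)

/-!
With constant `f_k ≡ r_k` the potential `∑_k r_k σ_(k)` is literally the welfare, so everything
rests on the exact-potential identity. If the creator of rank `p` drops its score to `0`, the
sorted score vector loses its `p`-th entry and gains a trailing `0`: every entry of rank
`k ≥ p` moves from `σ_(k)` to `σ_(k+1)`. The potential therefore drops by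
`∑_{k ≥ p} ∫_{σ_(k+1)}^{σ_(k)} f_k`, which is exactly that creator's reward. Since the
profile with creator `i` zeroed out does not depend on `sᵢ`, creator `i`'s utility differs
from the potential by a term independent of `sᵢ`, and a welfare maximiser, which exists
because the strategy sets are finite, is a pure Nash equilibrium.
-/

open Finset Function

theorem card_filter_lt_lt_card_filter_lt {ι α : Type*} [Fintype ι] [Preorder α]
    [DecidableLT α] {key : ι → α} {i j : ι} (h : key j < key i) :
    #{k | key i < key k} < #{k | key j < key k} := by
  refine card_lt_card (ssubset_iff_of_subset ?_ |>.mpr ⟨i, by simpa using h, by simp⟩)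
  intro k hk
  simp only [mem_filter, mem_univ, true_and] at hk ⊢
  exact h.trans hk

namespace BRM

variable {n : ℕ}

def rankKey (σ : Fin n → ℝ) (j : Fin n) : ℝ ×ₗ (Fin n)ᵒᵈ := toLex (σ j, OrderDual.toDual j)

theorem rankKey_injective (σ : Fin n → ℝ) : Injective (rankKey σ) := fun i j h => by
  simpa [rankKey] using congrArg (fun p => (ofLex p).2) h

theorem rankCount_eq_card (σ : Fin n → ℝ) (i : Fin n) :
    rankCount σ i = #{j | rankKey σ i < rankKey σ j} := by
  simp only [rankCount, rankKey, Prod.Lex.toLex_lt_toLex, OrderDual.toDual_lt_toDual]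

theorem rankCount_lt_rankCount {σ : Fin n → ℝ} {i j : Fin n}
    (h : rankKey σ j < rankKey σ i) : rankCount σ i < rankCount σ j := by
  rw [rankCount_eq_card, rankCount_eq_card]
  exact card_filter_lt_lt_card_filter_lt h

theorem rankCount_injective (σ : Fin n → ℝ) : Injective (rankCount σ) := by
  intro i j h
  by_contra hij
  rcases lt_or_gt_of_ne (rankKey_injective σ |>.ne hij) with hlt | hlt
  · exact (rankCount_lt_rankCount hlt).ne' h
  · exact (rankCount_lt_rankCount hlt).ne h

theorem rankCount_lt (σ : Fin n → ℝ) (i : Fin n) : rankCount σ i < n := by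
  simpa [rankCount_eq_card] using
    card_lt_univ_of_notMem (s := {j | rankKey σ i < rankKey σ j}) (x := i) (by simp)

theorem apply_le_of_rankCount_lt {σ : Fin n → ℝ} {i j : Fin n}
    (h : rankCount σ i < rankCount σ j) : σ j ≤ σ i := by
  by_contra! hlt
  exact (rankCount_lt_rankCount (Prod.Lex.toLex_lt_toLex.mpr (Or.inl hlt))).not_gt h

noncomputable def rankPerm (σ : Fin n → ℝ) : Equiv.Perm (Fin n) :=
  Equiv.ofBijective (fun i => ⟨rankCount σ i, rankCount_lt σ i⟩) <|
    Finite.injective_iff_bijective.mp fun _ _ h => rankCount_injective σ (Fin.val_eq_of_eq h)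

theorem rankPerm_apply_val (σ : Fin n → ℝ) (i : Fin n) :
    (rankPerm σ i : ℕ) = rankCount σ i := rfl

theorem antitone_comp_rankPerm_symm (σ : Fin n → ℝ) : Antitone (σ ∘ (rankPerm σ).symm) := by
  have hrank (a : Fin n) : rankCount σ ((rankPerm σ).symm a) = a := by
    rw [← rankPerm_apply_val, Equiv.apply_symm_apply]
  intro a b hab
  rcases hab.eq_or_lt with rfl | hlt
  · rfl
  · exact apply_le_of_rankCount_lt (σ := σ) (by rwa [hrank, hrank])

theorem antitone_sortDesc (σ : Fin n → ℝ) : Antitone (sortDesc σ) := fun _ _ h =>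
  Tuple.monotone_sort σ (Fin.rev_le_rev.mpr h)

theorem sortDesc_eq_comp_of_antitone {σ : Fin n → ℝ} (π : Equiv.Perm (Fin n))
    (h : Antitone (σ ∘ π)) : sortDesc σ = σ ∘ π :=
  Tuple.unique_antitone (σ := Fin.revPerm.trans (Tuple.sort σ)) (antitone_sortDesc σ) h

theorem sortDesc_eq_comp_rankPerm_symm (σ : Fin n → ℝ) :
    sortDesc σ = σ ∘ (rankPerm σ).symm :=
  sortDesc_eq_comp_of_antitone _ (antitone_comp_rankPerm_symm σ)

/-- The vector `τ` with its entry at position `p` removed and a `0` appended. -/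
def dropAt (p : ℕ) (τ : Fin n → ℝ) : Fin n → ℝ :=
  fun k => if (k : ℕ) < p then τ k else nextVal τ k

section Antitone

variable {τ : Fin n → ℝ} (hτ : Antitone τ) (h0 : ∀ k, 0 ≤ τ k)
include hτ h0

theorem nextVal_le (k : Fin n) : nextVal τ k ≤ τ k := by
  unfold nextVal
  split_ifs with h
  · exact hτ (Fin.le_def.mpr (Nat.le_succ _))
  · exact h0 k

theorem antitone_nextVal : Antitone (nextVal τ) := by
  intro a b hab
  have hab' : (a : ℕ) ≤ b := hab
  unfold nextVal
  split_ifs with hb ha ha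
  · exact hτ (Fin.le_def.mpr (Nat.succ_le_succ hab'))
  · omega
  · exact h0 _
  · rfl

theorem antitone_dropAt (p : ℕ) : Antitone (dropAt p τ) := by
  intro a b hab
  have hab' : (a : ℕ) ≤ b := hab
  simp only [dropAt]
  split_ifs with hb ha ha
  · exact hτ hab
  · omega
  · exact (nextVal_le hτ h0 b).trans (hτ hab)
  · exact antitone_nextVal hτ h0 hab

end Antitone

theorem dropAt_eq_update_comp_cycleIcc {m : ℕ} (τ : Fin (m + 1) → ℝ) (p : Fin (m + 1)) :
    dropAt p τ = update τ p 0 ∘ Fin.cycleIcc p (Fin.last m) := by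
  funext k
  simp only [dropAt, comp_apply, Fin.val_fin_lt]
  rcases lt_or_ge k p with hk | hk
  · rw [if_pos hk, Fin.cycleIcc_of_lt hk, update_of_ne hk.ne]
  rw [if_neg (not_lt.mpr hk)]
  rcases (Fin.le_last k).lt_or_eq with hl | rfl
  · have hk1 : (k : ℕ) + 1 < m + 1 := by simpa [Fin.lt_def] using hl
    rw [Fin.cycleIcc_of_ge_of_lt hk hl, update_of_ne, nextVal, dif_pos hk1]
    · congr 1; ext; simp [Fin.val_add_one_of_lt hl]
    · exact (hk.trans_lt (Fin.lt_add_one_iff.mpr hl)).ne'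
  · rw [Fin.cycleIcc_of_last hk, update_self, nextVal, dif_neg (by simp)]

theorem sortDesc_update_zero {σ : Fin n → ℝ} (hσ : ∀ j, 0 ≤ σ j) (i : Fin n) :
    sortDesc (update σ i 0) = dropAt (rankCount σ i) (sortDesc σ) := by
  obtain ⟨m, rfl⟩ : ∃ m, n = m + 1 := Nat.exists_eq_add_one_of_ne_zero i.pos.ne'
  have hdrop : dropAt (rankCount σ i) (sortDesc σ) =
      update σ i 0 ∘ ((rankPerm σ).symm * Fin.cycleIcc (rankPerm σ i) (Fin.last m)) := by
    rw [← rankPerm_apply_val, dropAt_eq_update_comp_cycleIcc, sortDesc_eq_comp_rankPerm_symm,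
      Equiv.Perm.coe_mul, ← comp_assoc, update_comp_equiv σ (rankPerm σ).symm, Equiv.symm_symm]
  rw [hdrop]
  refine sortDesc_eq_comp_of_antitone _ (hdrop ▸ antitone_dropAt (antitone_sortDesc σ) ?_ _)
  exact fun k => hσ _

theorem nextVal_mem {τ : Fin n → ℝ} {s : Set ℝ} (hs : 0 ∈ s) (hτ : ∀ k, τ k ∈ s)
    (k : Fin n) : nextVal τ k ∈ s := by
  unfold nextVal
  split_ifs
  exacts [hτ _, hs]

theorem brmRewardAt_eq_brmPotential_sub {f : Fin n → ℝ → ℝ}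
    (hf : ∀ k, IntervalIntegrable (f k) volume 0 1) {σ : Fin n → ℝ}
    (hσ : ∀ j, σ j ∈ Set.Icc (0 : ℝ) 1) (i : Fin n) :
    brmRewardAt f σ i = brmPotential f σ - brmPotential f (update σ i 0) := by
  have hsort (k : Fin n) : sortDesc σ k ∈ Set.Icc (0 : ℝ) 1 := hσ _
  rw [brmRewardAt, brmRankedN, brmPotential, brmPotential,
    sortDesc_update_zero (fun j => (hσ j).1), ← sum_sub_distrib]
  refine sum_congr rfl fun k _ => ?_
  have hint : ∀ a ∈ Set.Icc (0 : ℝ) 1, IntervalIntegrable (f k) volume 0 a := fun a ha =>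
    (hf k).mono_set (Set.uIcc_subset_uIcc_left (Set.Icc_subset_uIcc ha))
  simp only [dropAt]
  split_ifs with hpk hk hk
  · omega
  · exact (intervalIntegral.integral_interval_sub_left (hint _ (hsort k))
      (hint _ (nextVal_mem (by simp) hsort k))).symm
  · exact (sub_self _).symm
  · omega

section Game

variable {U : Type*} [Fintype U] {f : Fin n → ℝ → ℝ} {S : Fin n → Type*}
  {score : ∀ i, S i → U → ℝ} (c : ∀ i, S i → ℝ)

theorem c3Potential_sub_c3Utility (hf : ∀ k, IntervalIntegrable (f k) volume 0 1)
    (hscore : ∀ i a x, score i a x ∈ Set.Icc (0 : ℝ) 1) (s : ∀ i, S i) (i : Fin n) :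
    c3Potential f S score c s - c3Utility f S score c s i =
      ∑ x, brmPotential f (update (fun j => score j (s j) x) i 0) -
        ∑ j ∈ univ.erase i, c j (s j) := by
  simp only [c3Potential, c3Utility,
    brmRewardAt_eq_brmPotential_sub hf (fun j => hscore j (s j) _), sum_sub_distrib,
    ← add_sum_erase _ _ (mem_univ i)]
  ring

theorem c3Utility_update_sub_c3Utility (hf : ∀ k, IntervalIntegrable (f k) volume 0 1)
    (hscore : ∀ i a x, score i a x ∈ Set.Icc (0 : ℝ) 1) (s : ∀ i, S i) (i : Fin n)
    (a : S i) :
    c3Utility f S score c (update s i a) i - c3Utility f S score c s i =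
      c3Potential f S score c (update s i a) - c3Potential f S score c s := by
  have hscores (x : U) : update (fun j => score j (update s i a j) x) i 0 =
      update (fun j => score j (s j) x) i 0 := by
    simp only [apply_update (fun j b => score j b x), update_idem]
  have hcosts : ∑ j ∈ univ.erase i, c j (update s i a j) = ∑ j ∈ univ.erase i, c j (s j) :=
    sum_congr rfl fun j hj => by rw [update_of_ne (ne_of_mem_erase hj)]
  have h₁ := c3Potential_sub_c3Utility c hf hscore (update s i a) i
  have h₂ := c3Potential_sub_c3Utility c hf hscore s i
  simp only [hscores, hcosts] at h₁
  linarith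

end Game

theorem c3Potential_const_eq_c3Welfare {U : Type*} [Fintype U] (r : Fin n → ℝ)
    (S : Fin n → Type*) (score : ∀ i, S i → U → ℝ) (c : ∀ i, S i → ℝ) (s : ∀ i, S i) :
    c3Potential (fun k (_ : ℝ) => r k) S score c s = c3Welfare r S score c s := by
  simp [c3Potential, c3Welfare, brmPotential, mul_comm]

end BRM

theorem stmt12_general {n : ℕ} {U : Type*} [Fintype U]
    (S : Fin n → Type*) [∀ i, Fintype (S i)] [∀ i, Nonempty (S i)]
    (score : ∀ i, S i → U → ℝ) (c : ∀ i, S i → ℝ)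
    (hscore : ∀ i a x, score i a x ∈ Set.Icc (0:ℝ) 1)
    (r : Fin n → ℝ) :
    (∀ s : ∀ i, S i,
        c3Potential (fun k (_ : ℝ) => r k) S score c s = c3Welfare r S score c s) ∧
    (∀ s : ∀ i, S i,
        (∀ s' : ∀ i, S i, c3Welfare r S score c s' ≤ c3Welfare r S score c s) →
        ∀ (i : Fin n) (s'i : S i),
          c3Utility (fun k (_ : ℝ) => r k) S score c (Function.update s i s'i) i ≤
            c3Utility (fun k (_ : ℝ) => r k) S score c s i) ∧
    ∃ s : ∀ i, S i,
      (∀ (i : Fin n) (s'i : S i),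
          c3Utility (fun k (_ : ℝ) => r k) S score c (Function.update s i s'i) i ≤
            c3Utility (fun k (_ : ℝ) => r k) S score c s i) ∧
      ∀ s' : ∀ i, S i, c3Welfare r S score c s' ≤ c3Welfare r S score c s := by
  have hpot := BRM.c3Potential_const_eq_c3Welfare r S score c
  have hnash (s : ∀ i, S i) (hmax : ∀ s', c3Welfare r S score c s' ≤ c3Welfare r S score c s)
      (i : Fin n) (a : S i) :
      c3Utility (fun k (_ : ℝ) => r k) S score c (update s i a) i ≤
        c3Utility (fun k (_ : ℝ) => r k) S score c s i := by
    have h := BRM.c3Utility_update_sub_c3Utility c (f := fun k _ => r k)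
      (fun _ => intervalIntegrable_const) hscore s i a
    rw [hpot, hpot] at h
    linarith [hmax (update s i a)]
  obtain ⟨s, -, hs⟩ := exists_max_image univ (c3Welfare r S score c) univ_nonempty
  have hmax (s' : ∀ i, S i) := hs s' (mem_univ s')
  exact ⟨hpot, hnash, s, hnash s hmax, hmax⟩

/-- Under the BRCM mechanism `M[r₁,…,rₙ]` (constant functions
`f_k ≡ r_k` with `r₁ ≥ ⋯ ≥ rₙ ≥ 0`, `r₁ > 0`), the exact potential equals the social
welfare; consequently, when all strategy sets are finite and nonempty, every
welfare-maximizing profile is a pure Nash equilibrium and a welfare-optimal pure Nash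
equilibrium exists. -/
theorem stmt12 {n : ℕ} {U : Type*} [Fintype U]
    (S : Fin n → Type*) [∀ i, Fintype (S i)] [∀ i, Nonempty (S i)]
    (score : ∀ i, S i → U → ℝ) (c : ∀ i, S i → ℝ)
    (hscore : ∀ i a x, score i a x ∈ Set.Icc (0:ℝ) 1)
    (r : Fin n → ℝ)
    (hmono : ∀ k k' : Fin n, k ≤ k' → r k' ≤ r k)
    (hnonneg : ∀ k, 0 ≤ r k)
    (hpos : ∀ k : Fin n, (k : ℕ) = 0 → 0 < r k) :
    (∀ s : ∀ i, S i,
        c3Potential (fun k (_ : ℝ) => r k) S score c s = c3Welfare r S score c s) ∧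
    (∀ s : ∀ i, S i,
        (∀ s' : ∀ i, S i, c3Welfare r S score c s' ≤ c3Welfare r S score c s) →
        ∀ (i : Fin n) (s'i : S i),
          c3Utility (fun k (_ : ℝ) => r k) S score c (Function.update s i s'i) i ≤
            c3Utility (fun k (_ : ℝ) => r k) S score c s i) ∧
    ∃ s : ∀ i, S i,
      (∀ (i : Fin n) (s'i : S i),
          c3Utility (fun k (_ : ℝ) => r k) S score c (Function.update s i s'i) i ≤
            c3Utility (fun k (_ : ℝ) => r k) S score c s i) ∧
      ∀ s' : ∀ i, S i, c3Welfare r S score c s' ≤ c3Welfare r S score c s :=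
  stmt12_general S score c hscore r
end
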